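/- Let C be an MDS linear code over F_q with parameters [n,k,d], that is, a k-dimensional subspace of F_q^n whose minimum distance satisfies d = n − k + 1, with k ≥ 1. Then d_r(C) = n − k + r for every 1 ≤ r ≤ k. -/

import Mathlib

open Classical

/-- The support of a linear subspace `D` of `ι → F`:
the set of coordinates at which some element of `D` is nonzero. -/
def Submodule.suppSet {F ι : Type*} [Field F] (D : Submodule F (ι → F)) : Set ι :=
  {i | ∃ c ∈ D, c i ≠ 0}

/-- The `r`-th generalized Hamming weight of a linear code `C ⊆ F^ι`:
the minimum support size of an `r`-dimensional subcode of `C`. -/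
noncomputable def ghw {F ι : Type*} [Field F] (C : Submodule F (ι → F)) (r : ℕ) : ℕ :=
  sInf {w | ∃ D : Submodule F (ι → F),
    D ≤ C ∧ Module.finrank F D = r ∧ D.suppSet.ncard = w}

/-- The `r`-th relative generalized Hamming weight of the nested pair `C₂ ⊆ C₁`:
the minimum support size of an `r`-dimensional subcode `D` of `C₁` with `D ∩ C₂ = 0`. -/
noncomputable def rghw {F ι : Type*} [Field F] (C₁ C₂ : Submodule F (ι → F)) (r : ℕ) : ℕ :=
  sInf {w | ∃ D : Submodule F (ι → F),
    D ≤ C₁ ∧ D ⊓ C₂ = ⊥ ∧ Module.finrank F D = r ∧ D.suppSet.ncard = w}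

/-- The dual code of `C ⊆ F^n` with respect to the standard Euclidean inner product. -/
def dualCode {F : Type*} [Field F] {n : ℕ} (C : Submodule F (Fin n → F)) :
    Submodule F (Fin n → F) where
  carrier := {x | ∀ c ∈ C, ∑ i, x i * c i = 0}
  add_mem' := by
    intro a b ha hb c hc
    simp only [Set.mem_setOf_eq] at *
    simp [Pi.add_apply, add_mul, Finset.sum_add_distrib, ha c hc, hb c hc]
  zero_mem' := by simp
  smul_mem' := by
    intro t a ha c hc
    simp only [Set.mem_setOf_eq] at *
    simp [Pi.smul_apply, smul_eq_mul, mul_assoc, ← Finset.mul_sum, ha c hc]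

/-! The first generalized weight is the minimum distance, so `d₁ = n - k + 1`. The weights
strictly increase: in an `(r+1)`-dimensional subcode `D` of minimal support, the kernel of a
coordinate on which `D` does not vanish is `r`-dimensional with strictly smaller support. Hence
`n - k + r = d₁ + (r - 1) ≤ d_r ≤ d_k - (k - r) ≤ n - (k - r)`. -/

namespace Submodule

section

variable {K V : Type*} [Field K] [AddCommGroup V] [Module K V]

lemma exists_le_finrank_eq (C : Submodule K V) [FiniteDimensional K C] {r : ℕ}
    (hr : r ≤ Module.finrank K C) :
    ∃ D ≤ C, Module.finrank K D = r := by
  let b := Module.finBasis K C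
  let v : Fin r → V := fun j ↦ b (Fin.castLE hr j)
  have hv : LinearIndependent K v :=
    (b.linearIndependent.map' C.subtype C.ker_subtype).comp _ (Fin.castLE_injective hr)
  refine ⟨span K (Set.range v), span_le.mpr ?_, by rw [finrank_span_eq_card hv, Fintype.card_fin]⟩
  rintro _ ⟨j, rfl⟩
  exact (b _).2

lemma exists_eq_span_singleton_of_finrank_eq_one {D : Submodule K V}
    (hD : Module.finrank K D = 1) : ∃ c ≠ 0, D = K ∙ c := by
  have : FiniteDimensional K D := Module.finite_of_finrank_eq_succ hD
  have hD_ne : D ≠ ⊥ := by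
    rintro rfl
    simp at hD
  obtain ⟨c, hcD, hc⟩ := exists_mem_ne_zero_of_ne_bot hD_ne
  refine ⟨c, hc, (eq_of_le_of_finrank_eq ((span_singleton_le_iff_mem c D).mpr hcD) ?_).symm⟩
  rw [finrank_span_singleton hc, hD]

end

section

variable {F ι : Type*} [Field F]

lemma suppSet_span_singleton (c : ι → F) : (F ∙ c).suppSet = {i | c i ≠ 0} := by
  ext i
  constructor
  · rintro ⟨x, hx, hxi⟩
    obtain ⟨a, rfl⟩ := mem_span_singleton.mp hx
    exact right_ne_zero_of_mul hxi
  · exact fun hi ↦ ⟨c, mem_span_singleton_self c, hi⟩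

lemma exists_finrank_eq_ncard_suppSet_lt [Finite ι] {D : Submodule F (ι → F)} {r : ℕ}
    (hD : Module.finrank F D = r + 1) :
    ∃ D' ≤ D, Module.finrank F D' = r ∧ D'.suppSet.ncard < D.suppSet.ncard := by
  have : FiniteDimensional F D := Module.finite_of_finrank_eq_succ hD
  have hD_ne : D ≠ ⊥ := by
    rintro rfl
    simp at hD
  obtain ⟨x, hxD, hx⟩ := exists_mem_ne_zero_of_ne_bot hD_ne
  obtain ⟨i, hi : x i ≠ 0⟩ := Function.ne_iff.mp hx
  let f : D →ₗ[F] F := (LinearMap.proj i).comp D.subtype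
  have hf : Function.Surjective f := fun a ↦
    ⟨(a * (x i)⁻¹) • ⟨x, hxD⟩, by simp [f, inv_mul_cancel_right₀ hi]⟩
  have hker : Module.finrank F (LinearMap.ker f) = r := by
    have := LinearMap.finrank_range_add_finrank_ker f
    rw [LinearMap.range_eq_top.mpr hf, finrank_top, Module.finrank_self, hD] at this
    omega
  refine ⟨(LinearMap.ker f).map D.subtype, map_subtype_le D _,
    by rwa [finrank_map_subtype_eq], ?_⟩
  have hsupp : ((LinearMap.ker f).map D.subtype).suppSet ⊆ D.suppSet \ {i} := by
    rintro j ⟨_, ⟨y, hy, rfl⟩, hyj⟩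
    refine ⟨⟨y, y.2, hyj⟩, ?_⟩
    rintro rfl
    exact hyj hy
  exact (Set.ncard_le_ncard hsupp (Set.toFinite _)).trans_lt
    (Set.ncard_sdiff_singleton_lt_of_mem ⟨x, hxD, hi⟩ (Set.toFinite _))

end

end Submodule

open Submodule

section GeneralizedHammingWeight

variable {F ι : Type*} [Field F]

lemma ghw_le {C D : Submodule F (ι → F)} (hDC : D ≤ C) :
    ghw C (Module.finrank F D) ≤ D.suppSet.ncard :=
  Nat.sInf_le ⟨D, hDC, rfl, rfl⟩

lemma exists_ncard_suppSet_eq_ghw [Finite ι] (C : Submodule F (ι → F)) {r : ℕ}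
    (hr : r ≤ Module.finrank F C) :
    ∃ D ≤ C, Module.finrank F D = r ∧ D.suppSet.ncard = ghw C r := by
  obtain ⟨D, hDC, hD⟩ := C.exists_le_finrank_eq hr
  exact Nat.sInf_mem (s := {w | ∃ D : Submodule F (ι → F),
    D ≤ C ∧ Module.finrank F D = r ∧ D.suppSet.ncard = w}) ⟨_, D, hDC, hD, rfl⟩

lemma ghw_lt_ghw_succ [Finite ι] (C : Submodule F (ι → F)) {r : ℕ}
    (hr : r + 1 ≤ Module.finrank F C) : ghw C r < ghw C (r + 1) := by
  obtain ⟨D, hDC, hD, hDw⟩ := exists_ncard_suppSet_eq_ghw C hr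
  obtain ⟨D', hD'D, hD', hlt⟩ := exists_finrank_eq_ncard_suppSet_lt hD
  calc ghw C r = ghw C (Module.finrank F D') := by rw [hD']
    _ ≤ D'.suppSet.ncard := ghw_le (hD'D.trans hDC)
    _ < D.suppSet.ncard := hlt
    _ = ghw C (r + 1) := hDw

lemma ghw_add_sub_le [Finite ι] (C : Submodule F (ι → F)) {r s : ℕ} (hrs : r ≤ s)
    (hs : s ≤ Module.finrank F C) : ghw C r + (s - r) ≤ ghw C s := by
  induction s, hrs using Nat.le_induction with
  | base => simp
  | succ s hrs ih =>
    have hstep := ghw_lt_ghw_succ C hs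
    have hprev := ih (by omega)
    omega

lemma ghw_finrank_le_card [Finite ι] (C : Submodule F (ι → F)) :
    ghw C (Module.finrank F C) ≤ Nat.card ι :=
  (ghw_le le_rfl).trans (Set.ncard_le_card _)

lemma ghw_one [Fintype ι] [DecidableEq F] (C : Submodule F (ι → F)) :
    ghw C 1 = sInf {w | ∃ c ∈ C, c ≠ 0 ∧ hammingNorm c = w} := by
  have hweight (c : ι → F) : (F ∙ c).suppSet.ncard = hammingNorm c := by
    rw [suppSet_span_singleton, hammingNorm, ← Set.ncard_coe_finset, Finset.coe_filter_univ]
  unfold ghw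
  congr 1
  ext w
  constructor
  · rintro ⟨D, hDC, hD, rfl⟩
    obtain ⟨c, hc, rfl⟩ := exists_eq_span_singleton_of_finrank_eq_one hD
    exact ⟨c, (span_singleton_le_iff_mem c C).mp hDC, hc, (hweight c).symm⟩
  · rintro ⟨c, hcC, hc, rfl⟩
    exact ⟨F ∙ c, (span_singleton_le_iff_mem c C).mpr hcC, finrank_span_singleton hc, hweight c⟩

end GeneralizedHammingWeight

theorem statement_4_general {F : Type*} [Field F] [DecidableEq F] {n k : ℕ}
    (C : Submodule F (Fin n → F)) (hk : Module.finrank F C = k)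
    (hMDS : sInf {w | ∃ c ∈ C, c ≠ (0 : Fin n → F) ∧ hammingNorm c = w} = n - k + 1) :
    ∀ r : ℕ, 1 ≤ r → r ≤ k → ghw C r = n - k + r := by
  intro r hr1 hrk
  subst hk
  rw [← ghw_one] at hMDS
  have hlower := ghw_add_sub_le C hr1 hrk
  have hupper := ghw_add_sub_le C hrk le_rfl
  have hk_le := ghw_finrank_le_card C
  rw [Nat.card_fin] at hk_le
  omega

/-- if `C` is an MDS `[n,k,d]` code (i.e. `d = n - k + 1`) with `k ≥ 1`,
then `d_r(C) = n - k + r` for every `1 ≤ r ≤ k`. -/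
theorem statement_4 {F : Type*} [Field F] [Fintype F] [DecidableEq F] {n k : ℕ}
    (C : Submodule F (Fin n → F)) (hk : Module.finrank F C = k) (hk1 : 1 ≤ k)
    (hMDS : sInf {w | ∃ c ∈ C, c ≠ (0 : Fin n → F) ∧ hammingNorm c = w} = n - k + 1) :
    ∀ r : ℕ, 1 ≤ r → r ≤ k → ghw C r = n - k + r :=
  statement_4_general C hk hMDS
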